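/- arXiv:1803.02387 — 2 statements merged into one kernel-verified Lean document; each statement's English description precedes it below -/
import Mathlib

section
/- For every positive integer s, setting q = ⌊√(2s−1)⌋, there exists an integer k such that (q−k)² ≤ s−k². -/
theorem stmt_0 (s : ℕ) (hs : 0 < s) (q : ℤ) (hq : q = ⌊Real.sqrt (2 * s - 1)⌋) :
    ∃ k : ℤ, (q - k) ^ 2 ≤ (s : ℤ) - k ^ 2 := by
  have hx : (0:ℝ) ≤ 2 * s - 1 := by
    have : (1:ℝ) ≤ s := by exact_mod_cast hs
    linarith
  have hq0 : 0 ≤ q := by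
    rw [hq]
    exact Int.floor_nonneg.mpr (Real.sqrt_nonneg _)
  have hle : (q:ℝ) ≤ Real.sqrt (2 * s - 1) := by
    rw [hq]; exact Int.floor_le _
  have hsq : (q:ℝ)^2 ≤ 2 * s - 1 := by
    have := mul_self_le_mul_self (by exact_mod_cast hq0) hle
    calc (q:ℝ)^2 = q * q := sq (q:ℝ)
    _ ≤ Real.sqrt (2*s-1) * Real.sqrt (2*s-1) := this
    _ = 2 * s - 1 := Real.mul_self_sqrt hx
  have hsqZ : q^2 ≤ 2 * (s:ℤ) - 1 := by exact_mod_cast hsq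
  rcases Int.even_or_odd q with ⟨e, he⟩ | ⟨e, he⟩
  · exact ⟨e, by nlinarith⟩
  · exact ⟨e, by nlinarith⟩
end

section
/- The largest real root e_s of the polynomial Λ_s(t) = t³ − 3st + 2s satisfies e_s < √(3s) for every integer s ≥ 2, and e_s > √(2s) for every integer s ≥ 3. -/
theorem stmt_9 (s : ℤ) (e : ℝ)
    (hroot : e ^ 3 - 3 * s * e + 2 * s = 0)
    (hmax : ∀ t : ℝ, t ^ 3 - 3 * s * t + 2 * s = 0 → t ≤ e) :
    (2 ≤ s → e < Real.sqrt (3 * s)) ∧ (3 ≤ s → Real.sqrt (2 * s) < e) := by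
  constructor
  · intro hs
    have hs' : (2 : ℝ) ≤ (s : ℝ) := by exact_mod_cast hs
    by_contra h
    push_neg at h
    have h3 : (0 : ℝ) ≤ 3 * (s : ℝ) := by linarith
    have hsq : Real.sqrt (3 * s) ^ 2 = 3 * s := Real.sq_sqrt h3
    have hnn : 0 ≤ Real.sqrt (3 * s) := Real.sqrt_nonneg _
    have he : 0 ≤ e := le_trans hnn h
    nlinarith [sq_nonneg (e - Real.sqrt (3 * s)), mul_nonneg he he]
  · intro hs
    have hs' : (3 : ℝ) ≤ (s : ℝ) := by exact_mod_cast hs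
    set f : ℝ → ℝ := fun t => t ^ 3 - 3 * s * t + 2 * s with hf
    have hcont : ContinuousOn f (Set.Icc (Real.sqrt (2 * s)) (s : ℝ)) := by
      apply Continuous.continuousOn; fun_prop
    have h2 : (0 : ℝ) ≤ 2 * (s : ℝ) := by linarith
    have hsq : Real.sqrt (2 * s) ^ 2 = 2 * s := Real.sq_sqrt h2
    have hnn : 0 ≤ Real.sqrt (2 * s) := Real.sqrt_nonneg _
    have hab : Real.sqrt (2 * s) ≤ (s : ℝ) := by
      have h1 := Real.sqrt_le_sqrt (show (2:ℝ) * s ≤ (s:ℝ) ^ 2 by nlinarith)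
      rwa [Real.sqrt_sq (by linarith : (0:ℝ) ≤ (s:ℝ))] at h1
    have hfa : f (Real.sqrt (2 * s)) < 0 := by
      have hlt : (2 : ℝ) < Real.sqrt (2 * s) := by
        nlinarith [Real.sq_sqrt h2, Real.sqrt_nonneg (2 * (s:ℝ))]
      have : f (Real.sqrt (2 * s)) = (s : ℝ) * (2 - Real.sqrt (2 * s)) := by
        simp only [hf]
        nlinarith [hsq]
      rw [this]
      apply mul_neg_of_pos_of_neg <;> linarith
    have hfb : 0 ≤ f (s : ℝ) := by
      have hm : 0 ≤ (s:ℝ) * ((s:ℝ) - 1) * ((s:ℝ) - 2) :=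
        mul_nonneg (mul_nonneg (by linarith) (by linarith)) (by linarith)
      simp only [hf]
      nlinarith [hm]
    have := intermediate_value_Icc hab hcont
    have hmem : (0 : ℝ) ∈ Set.Icc (f (Real.sqrt (2 * s))) (f (s : ℝ)) :=
      ⟨le_of_lt hfa, hfb⟩
    obtain ⟨c, hc, hfc⟩ := this hmem
    have hce : c ≤ e := hmax c hfc
    have : Real.sqrt (2 * s) < c := by
      rcases lt_or_eq_of_le hc.1 with h | h
      · exact h
      · exfalso; rw [← h] at hfc; linarith
    linarith
end
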